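/- arXiv:2511.09792 — 2 statements merged into one kernel-verified Lean document; each statement's English description precedes it below -/
import Mathlib

section
/- (Smooth-to-limit gradient convergence; Clarke-free form of Lemma 1.) Consider N agents with finite nonempty action sets A_i, joint action set A = ∏ A_i, payoff y : A → ℝ, and joint value Q_tot : A × ℝ^d → ℝ with q ↦ Q_tot(a;q) continuously differentiable for each a, where the parameter q ∈ ℝ^d consists exactly of the local value coordinates q_{i,b}. Let L_τ(q) = Σ_{a∈A} μ_τ(a|q)(y(a) − Q_tot(a;q))² be the softmax-weighted loss. If at the point q each agent's local values have a strict maximizer, so that the greedy joint action g is constant near q and the greedy loss L_0(q') = (y(g(q')) − Q_tot(g(q');q'))² is differentiable near q, then for every sequence of temperatures τ_k ↓ 0 one has lim_{k→∞} ∇_q L_{τ_k}(q) = ∇_q L_0(q). -/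
/-- Softmax policy with temperature `τ` on a finite action set `A`. -/
noncomputable def softmax {A : Type*} [Fintype A] (τ : ℝ) (q : A → ℝ) (a : A) : ℝ :=
  Real.exp (q a / τ) / ∑ b : A, Real.exp (q b / τ)

/-- A choice of maximizer of a real-valued function on a finite nonempty type. -/
noncomputable def argmaxOf {B : Type*} [Finite B] [Nonempty B] (f : B → ℝ) : B :=
  (Finite.exists_max f).choose

/-! As `τ → 0⁺` the softmax weight of a strictly dominated action decays like `exp (-δ / τ)`,
faster than any power of `τ`, so both that weight and its `1/τ`-scaled parameter derivative
vanish, while the weight of the strict maximizer tends to `1`. Hence the joint policy tends to the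
point mass at the greedy action `g` with vanishing derivative, and the product rule leaves only
`∇ (y g - Q_tot (g; ·))²` in the limit. Near `q` the greedy action stays equal to `g`, so this is
`∇ L₀ q`. -/

open Filter Topology Finset

section FDerivLimits

variable {α ι E : Type*} [Fintype ι] [NormedAddCommGroup E] [NormedSpace ℝ E]
  {l : Filter α} {x : E}

lemma tendsto_fderiv_prod_of_tendsto_fderiv_zero {f : α → ι → E → ℝ} {c : ι → ℝ}
    (hf : ∀ t i, DifferentiableAt ℝ (f t i) x) (hlim : ∀ i, Tendsto (fun t => f t i x) l (𝓝 (c i)))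
    (hf' : ∀ i, Tendsto (fun t => fderiv ℝ (f t i) x) l (𝓝 0)) :
    Tendsto (fun t => fderiv ℝ (fun y => ∏ i, f t i y) x) l (𝓝 0) := by
  classical
  have hprod : ∀ t, fderiv ℝ (fun y => ∏ i, f t i y) x =
      ∑ i, (∏ j ∈ univ.erase i, f t j x) • fderiv ℝ (f t i) x := fun t =>
    (HasFDerivAt.finsetProd fun i _ => (hf t i).hasFDerivAt).fderiv
  simp_rw [hprod]
  simpa using tendsto_finsetSum univ fun i _ =>
    (tendsto_finsetProd (univ.erase i) fun j _ => hlim j).smul (hf' i)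

lemma tendsto_fderiv_sum_mul {w : α → ι → E → ℝ} {h : ι → E → ℝ} {c : ι → ℝ}
    (hw : ∀ t i, DifferentiableAt ℝ (w t i) x) (hh : ∀ i, DifferentiableAt ℝ (h i) x)
    (hlim : ∀ i, Tendsto (fun t => w t i x) l (𝓝 (c i)))
    (hw' : ∀ i, Tendsto (fun t => fderiv ℝ (w t i) x) l (𝓝 0)) :
    Tendsto (fun t => fderiv ℝ (fun y => ∑ i, w t i y * h i y) x) l
      (𝓝 (∑ i, c i • fderiv ℝ (h i) x)) := by
  have hsum : ∀ t, fderiv ℝ (fun y => ∑ i, w t i y * h i y) x =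
      ∑ i, (w t i x • fderiv ℝ (h i) x + h i x • fderiv ℝ (w t i) x) := fun t =>
    (HasFDerivAt.fun_sum fun i _ => (hw t i).hasFDerivAt.mul (hh i).hasFDerivAt).fderiv
  simp_rw [hsum]
  simpa using tendsto_finsetSum univ fun i _ =>
    ((hlim i).smul_const (fderiv ℝ (h i) x)).add ((hw' i).const_smul (h i x))

end FDerivLimits

lemma tendsto_exp_div_div_nhdsGT_zero {δ : ℝ} (hδ : δ < 0) :
    Tendsto (fun τ => Real.exp (δ / τ) / τ) (𝓝[>] 0) (𝓝 0) := by
  have hlin : Tendsto (fun τ : ℝ => -δ / τ) (𝓝[>] 0) atTop :=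
    tendsto_inv_nhdsGT_zero.const_mul_atTop (neg_pos.2 hδ)
  have := ((Real.tendsto_pow_mul_exp_neg_atTop_nhds_zero 1).comp hlin).const_mul (-δ)⁻¹
  rw [mul_zero] at this
  refine this.congr fun τ => ?_
  simp only [Function.comp_apply, pow_one, neg_div, neg_neg]
  field_simp [hδ.ne]

section Softmax

variable {B : Type*} [Fintype B] {x : B → ℝ} {g : B}

lemma sum_exp_div_pos [Nonempty B] (τ : ℝ) (x : B → ℝ) : 0 < ∑ b, Real.exp (x b / τ) :=
  sum_pos (fun _ _ => Real.exp_pos _) univ_nonempty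

lemma softmax_nonneg (τ : ℝ) (x : B → ℝ) (b : B) : 0 ≤ softmax τ x b := by
  unfold softmax; positivity

lemma sum_softmax [Nonempty B] (τ : ℝ) (x : B → ℝ) : ∑ b, softmax τ x b = 1 := by
  simp only [softmax]
  rw [← sum_div, div_self (sum_exp_div_pos τ x).ne']

lemma softmax_le_exp_sub (τ : ℝ) (x : B → ℝ) (b g : B) :
    softmax τ x b ≤ Real.exp ((x b - x g) / τ) := by
  rw [sub_div, Real.exp_sub]
  exact div_le_div_of_nonneg_left (Real.exp_pos _).le (Real.exp_pos _)
    (single_le_sum (fun c _ => (Real.exp_pos (x c / τ)).le) (mem_univ g))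

lemma tendsto_softmax_div_nhdsGT_zero {b : B} (hb : x b < x g) :
    Tendsto (fun τ => softmax τ x b / τ) (𝓝[>] 0) (𝓝 0) := by
  refine squeeze_zero' ?_ ?_ (tendsto_exp_div_div_nhdsGT_zero (sub_neg.2 hb))
  · filter_upwards [self_mem_nhdsWithin] with τ hτ
    exact div_nonneg (softmax_nonneg τ x b) (le_of_lt hτ)
  · filter_upwards [self_mem_nhdsWithin] with τ hτ
    exact div_le_div_of_nonneg_right (softmax_le_exp_sub τ x b g) (le_of_lt hτ)

lemma tendsto_softmax_nhdsGT_zero_of_lt {b : B} (hb : x b < x g) :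
    Tendsto (fun τ => softmax τ x b) (𝓝[>] 0) (𝓝 0) := by
  have := (tendsto_softmax_div_nhdsGT_zero hb).mul
    (tendsto_nhdsWithin_of_tendsto_nhds (tendsto_id (x := 𝓝 (0 : ℝ))))
  rw [zero_mul] at this
  refine this.congr' ?_
  filter_upwards [self_mem_nhdsWithin] with τ hτ
  exact div_mul_cancel₀ _ (ne_of_gt hτ)

lemma tendsto_softmax_nhdsGT_zero [DecidableEq B] (hg : ∀ b ≠ g, x b < x g) (b : B) :
    Tendsto (fun τ => softmax τ x b) (𝓝[>] 0) (𝓝 (if b = g then 1 else 0)) := by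
  have : Nonempty B := ⟨g⟩
  split_ifs with hbg
  · subst hbg
    have hrest := tendsto_finsetSum (univ.erase b) fun c hc =>
      tendsto_softmax_nhdsGT_zero_of_lt (hg c (ne_of_mem_erase hc))
    have := (tendsto_const_nhds (x := (1 : ℝ))).sub hrest
    simp only [sum_const_zero, sub_zero] at this
    refine this.congr fun τ => ?_
    rw [← sum_softmax τ x, ← sum_erase_add _ _ (mem_univ b), add_sub_cancel_left]
  · exact tendsto_softmax_nhdsGT_zero_of_lt (hg b hbg)

/-- The Jacobian row `softmax_b / τ • (dx_b - ∑ c, softmax_c • dx_c)`, rewritten with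
`∑ c, softmax_c = 1` so that every nonzero term carries `softmax_b * softmax_c / τ` with `b ≠ c`;
as `τ → 0⁺` this vanishes because `b` or `c` is not the maximizer. -/
noncomputable def softmaxFDeriv (τ : ℝ) (x : B → ℝ) (b : B) : (B → ℝ) →L[ℝ] ℝ :=
  ∑ c, (softmax τ x b * softmax τ x c / τ) •
    (ContinuousLinearMap.proj (R := ℝ) (φ := fun _ : B => ℝ) b - ContinuousLinearMap.proj c)

lemma hasFDerivAt_softmax [Nonempty B] (τ : ℝ) (x : B → ℝ) (b : B) :
    HasFDerivAt (fun x => softmax τ x b) (softmaxFDeriv τ x b) x := by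
  have hexp : ∀ c : B, HasFDerivAt (fun x : B → ℝ => Real.exp (x c / τ))
      (Real.exp (x c / τ) • (τ⁻¹ • ContinuousLinearMap.proj (R := ℝ) c)) x := fun c => by
    simpa only [div_eq_mul_inv, mul_comm _ τ⁻¹] using
      ((hasFDerivAt_apply (𝕜 := ℝ) c x).const_mul τ⁻¹).exp
  have hS := sum_exp_div_pos τ x
  have := (hexp b).mul
    ((hasDerivAt_inv hS.ne').comp_hasFDerivAt x (HasFDerivAt.fun_sum fun c _ => hexp c))
  simp only [softmax, div_eq_mul_inv]
  refine this.congr_fderiv ?_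
  ext v
  have hsum : ∑ c, softmax τ x c * v c =
      (∑ c, Real.exp (x c / τ) * v c) / ∑ c, Real.exp (x c / τ) := by
    simp only [softmax, div_mul_eq_mul_div, sum_div]
  calc _ = softmax τ x b / τ * ((∑ c, softmax τ x c) * v b - ∑ c, softmax τ x c * v c) := by
        rw [sum_softmax, hsum]
        simp only [neg_smul, smul_neg, Function.comp_apply, add_apply, neg_apply, smul_apply,
          _root_.sum_apply, ContinuousLinearMap.proj_apply, smul_eq_mul, mul_left_comm _ τ⁻¹,
          ← mul_sum, softmax, one_mul]
        field_simp
        ring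
    _ = softmaxFDeriv τ x b v := by
        simp only [mul_sub, sum_mul, mul_sum, ← sum_sub_distrib]
        simp only [softmaxFDeriv, _root_.sum_apply, smul_apply, sub_apply,
          ContinuousLinearMap.proj_apply, smul_eq_mul]
        exact sum_congr rfl fun c _ => by ring

lemma tendsto_softmaxFDeriv_nhdsGT_zero (hg : ∀ b ≠ g, x b < x g) (b : B) :
    Tendsto (fun τ => softmaxFDeriv τ x b) (𝓝[>] 0) (𝓝 0) := by
  classical
  have hcoeff : ∀ c ≠ b,
      Tendsto (fun τ => softmax τ x b * softmax τ x c / τ) (𝓝[>] 0) (𝓝 0) := by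
    intro c hcb
    by_cases hbg : b = g
    · subst hbg
      simpa [mul_div_assoc] using
        (tendsto_softmax_nhdsGT_zero hg b).mul (tendsto_softmax_div_nhdsGT_zero (hg c hcb))
    · simpa [mul_div_right_comm] using
        (tendsto_softmax_div_nhdsGT_zero (hg b hbg)).mul (tendsto_softmax_nhdsGT_zero hg c)
  have hterm : ∀ c, Tendsto (fun τ => (softmax τ x b * softmax τ x c / τ) •
      (ContinuousLinearMap.proj (R := ℝ) (φ := fun _ : B => ℝ) b - ContinuousLinearMap.proj c))
      (𝓝[>] 0) (𝓝 0) := by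
    intro c
    by_cases hcb : c = b
    · simp [hcb]
    · have := (hcoeff c hcb).smul_const
        (ContinuousLinearMap.proj (R := ℝ) (φ := fun _ : B => ℝ) b - ContinuousLinearMap.proj c)
      rwa [zero_smul] at this
  simpa [softmaxFDeriv] using tendsto_finsetSum univ fun c _ => hterm c

end Softmax

section Greedy

lemma argmaxOf_eq_of_forall_lt {B : Type*} [Finite B] [Nonempty B] {f : B → ℝ} {g : B}
    (h : ∀ b ≠ g, f b < f g) : argmaxOf f = g := by
  by_contra hne
  exact (h _ hne).not_ge ((Finite.exists_max f).choose_spec g)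

lemma eventually_argmaxOf_eq {B : Type*} [Finite B] [Nonempty B] {x : B → ℝ} {g : B}
    (h : ∀ b ≠ g, x b < x g) : ∀ᶠ x' in 𝓝 x, argmaxOf x' = g := by
  have : ∀ᶠ x' in 𝓝 x, ∀ b, b ≠ g → x' b < x' g := eventually_all.2 fun b => by
    by_cases hb : b = g
    · exact .of_forall fun _ hne => absurd hb hne
    · exact ((continuous_apply b).continuousAt.eventually_lt (continuous_apply g).continuousAt
        (h b hb)).mono fun _ hlt _ => hlt
  exact this.mono fun _ => argmaxOf_eq_of_forall_lt

end Greedy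

section JointSoftmax

variable {ι : Type*} {A : ι → Type*}

noncomputable def sigmaRestrict (i : ι) : ((Σ i, A i) → ℝ) →L[ℝ] (A i → ℝ) :=
  ContinuousLinearMap.pi fun b => ContinuousLinearMap.proj ⟨i, b⟩

lemma eventually_argmaxOf_sigma_eq [Finite ι] [∀ i, Finite (A i)] [∀ i, Nonempty (A i)]
    {q : (Σ i, A i) → ℝ} {g : ∀ i, A i} (hg : ∀ i, ∀ b ≠ g i, q ⟨i, b⟩ < q ⟨i, g i⟩) :
    ∀ᶠ q' in 𝓝 q, (fun i => argmaxOf fun b => q' ⟨i, b⟩) = g := by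
  have := eventually_all.2 fun i =>
    ((sigmaRestrict (A := A) i).continuous.tendsto q).eventually (eventually_argmaxOf_eq (hg i))
  exact this.mono fun _ h => funext h

variable [Fintype ι] [∀ i, Fintype (A i)]

noncomputable def jointSoftmax (τ : ℝ) (q : (Σ i, A i) → ℝ) (a : ∀ i, A i) : ℝ :=
  ∏ i, softmax τ (fun b => q ⟨i, b⟩) (a i)

variable {q : (Σ i, A i) → ℝ} {g : ∀ i, A i}

lemma tendsto_jointSoftmax_nhdsGT_zero [DecidableEq (∀ i, A i)]
    (hg : ∀ i, ∀ b ≠ g i, q ⟨i, b⟩ < q ⟨i, g i⟩) (a : ∀ i, A i) :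
    Tendsto (fun τ => jointSoftmax τ q a) (𝓝[>] 0) (𝓝 (if a = g then 1 else 0)) := by
  classical
  have := tendsto_finsetProd univ fun i _ => tendsto_softmax_nhdsGT_zero (hg i) (a i)
  simpa [jointSoftmax, Fintype.prod_boole, ← funext_iff] using this

variable [∀ i, Nonempty (A i)]

lemma hasFDerivAt_softmax_sigmaRestrict (τ : ℝ) (q : (Σ i, A i) → ℝ) (i : ι) (b : A i) :
    HasFDerivAt (fun q' : (Σ i, A i) → ℝ => softmax τ (fun c => q' ⟨i, c⟩) b)
      ((softmaxFDeriv τ (fun c => q ⟨i, c⟩) b).comp (sigmaRestrict i)) q :=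
  (hasFDerivAt_softmax τ _ b).comp q (sigmaRestrict i).hasFDerivAt

lemma differentiableAt_jointSoftmax (τ : ℝ) (q : (Σ i, A i) → ℝ) (a : ∀ i, A i) :
    DifferentiableAt ℝ (fun q' => jointSoftmax τ q' a) q := by
  classical
  exact (HasFDerivAt.finsetProd fun i _ =>
    hasFDerivAt_softmax_sigmaRestrict τ q i (a i)).differentiableAt

lemma tendsto_fderiv_jointSoftmax_nhdsGT_zero (hg : ∀ i, ∀ b ≠ g i, q ⟨i, b⟩ < q ⟨i, g i⟩)
    (a : ∀ i, A i) :
    Tendsto (fun τ => fderiv ℝ (fun q' => jointSoftmax τ q' a) q) (𝓝[>] 0) (𝓝 0) := by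
  classical
  refine tendsto_fderiv_prod_of_tendsto_fderiv_zero
    (fun τ i => (hasFDerivAt_softmax_sigmaRestrict τ q i (a i)).differentiableAt)
    (fun i => tendsto_softmax_nhdsGT_zero (hg i) (a i)) fun i => ?_
  simp_rw [(hasFDerivAt_softmax_sigmaRestrict _ q i (a i)).fderiv]
  simpa [Function.comp_def] using
    ((continuous_id.clm_comp_const (sigmaRestrict i)).tendsto 0).comp
      (tendsto_softmaxFDeriv_nhdsGT_zero (hg i) (a i))

end JointSoftmax

theorem grad_surrogateLoss_tendsto_grad_greedyLoss_general {N : ℕ} {A : Fin N → Type*}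
    [∀ i, Fintype (A i)] [∀ i, Nonempty (A i)]
    (y : (∀ i, A i) → ℝ)
    (Qtot : (∀ i, A i) → ((Σ i, A i) → ℝ) → ℝ)
    (hQ : ∀ a, ContDiff ℝ 1 (Qtot a))
    (q : (Σ i, A i) → ℝ) (g : ∀ i, A i)
    (hg : ∀ i, ∀ b ≠ g i, q ⟨i, b⟩ < q ⟨i, g i⟩)
    (L0 : ((Σ i, A i) → ℝ) → ℝ)
    (hL0 : ∀ q', L0 q' =
      (y (fun i => argmaxOf (fun b => q' ⟨i, b⟩)) -
        Qtot (fun i => argmaxOf (fun b => q' ⟨i, b⟩)) q') ^ 2)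
    (τseq : ℕ → ℝ) (hpos : ∀ k, 0 < τseq k)
    (hlim : Filter.Tendsto τseq Filter.atTop (nhds 0)) :
    Filter.Tendsto
      (fun k => fderiv ℝ
        (fun q' : (Σ i, A i) → ℝ => ∑ a : ∀ i, A i,
          (∏ i, softmax (τseq k) (fun b => q' ⟨i, b⟩) (a i)) * (y a - Qtot a q') ^ 2) q)
      Filter.atTop (nhds (fderiv ℝ L0 q)) := by
  classical
  have hτ : Tendsto τseq atTop (𝓝[>] 0) := tendsto_nhdsWithin_iff.2 ⟨hlim, .of_forall hpos⟩
  have hL0g : fderiv ℝ L0 q = fderiv ℝ (fun q' => (y g - Qtot g q') ^ 2) q :=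
    Filter.EventuallyEq.fderiv_eq <|
      (eventually_argmaxOf_sigma_eq hg).mono fun q' hq' => by rw [hL0, hq']
  have hres : ∀ a, DifferentiableAt ℝ (fun q' => (y a - Qtot a q') ^ 2) q := fun a =>
    (((hQ a).differentiable one_ne_zero q).const_sub (y a)).pow 2
  have hsurr := tendsto_fderiv_sum_mul (fun τ a => differentiableAt_jointSoftmax τ q a) hres
    (tendsto_jointSoftmax_nhdsGT_zero hg) (tendsto_fderiv_jointSoftmax_nhdsGT_zero hg)
  rw [hL0g]
  simp only [ite_smul, one_smul, zero_smul, sum_ite_eq', mem_univ, if_true] at hsurr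
  exact hsurr.comp hτ

/-- smooth-to-limit gradient convergence; Clarke-free form of Lemma 1:
with parameter vector consisting exactly of the local value coordinates `q (i, b)`, if at
`q` each agent's local values have a strict maximizer (so the greedy joint action is
constant near `q` and the greedy loss `L_0` is differentiable near `q`), then for every
sequence of temperatures `τ_k ↓ 0`, `∇L_{τ_k}(q) → ∇L_0(q)`. -/
theorem grad_surrogateLoss_tendsto_grad_greedyLoss {N : ℕ} {A : Fin N → Type*}
    [∀ i, Fintype (A i)] [∀ i, Nonempty (A i)]
    (y : (∀ i, A i) → ℝ)
    (Qtot : (∀ i, A i) → ((Σ i, A i) → ℝ) → ℝ)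
    (hQ : ∀ a, ContDiff ℝ 1 (Qtot a))
    (q : (Σ i, A i) → ℝ) (g : ∀ i, A i)
    (hg : ∀ i, ∀ b ≠ g i, q ⟨i, b⟩ < q ⟨i, g i⟩)
    (L0 : ((Σ i, A i) → ℝ) → ℝ)
    (hL0 : ∀ q', L0 q' =
      (y (fun i => argmaxOf (fun b => q' ⟨i, b⟩)) -
        Qtot (fun i => argmaxOf (fun b => q' ⟨i, b⟩)) q') ^ 2)
    (τseq : ℕ → ℝ) (hpos : ∀ k, 0 < τseq k) (hanti : StrictAnti τseq)
    (hlim : Filter.Tendsto τseq Filter.atTop (nhds 0)) :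
    Filter.Tendsto
      (fun k => fderiv ℝ
        (fun q' : (Σ i, A i) → ℝ => ∑ a : ∀ i, A i,
          (∏ i, softmax (τseq k) (fun b => q' ⟨i, b⟩) (a i)) * (y a - Qtot a q') ^ 2) q)
      Filter.atTop (nhds (fderiv ℝ L0 q)) :=
  grad_surrogateLoss_tendsto_grad_greedyLoss_general y Qtot hQ q g hg L0 hL0 τseq hpos hlim
end

section
/- (Quantitative loss convergence.) Consider N agents with finite nonempty action sets A_i, payoff y : A → ℝ on A = ∏ A_i, joint value Q_tot : A × ℝ^d → ℝ, and a point q ∈ ℝ^d containing local value coordinates q_{i,b} such that each q_i has a strict maximizer g_i(q) with gap at least δ > 0. Let R = max_{a∈A} (y(a) − Q_tot(a;q))². Then for every τ > 0, the softmax-weighted loss satisfies |L_τ(q) − L_0(q)| ≤ 2 R · (Σ_i (|A_i| − 1)) · exp(−δ/τ), where L_0(q) = (y(g(q)) − Q_tot(g(q);q))² is the greedy loss. -/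
section helpers
variable {A : Type*} [Fintype A] [Nonempty A] (τ : ℝ) (q : A → ℝ)

lemma softmax_nonneg_s19 (a : A) : 0 ≤ softmax τ q a :=
  div_nonneg (Real.exp_pos _).le (Finset.sum_nonneg fun b _ => (Real.exp_pos _).le)

lemma softmax_sum_one : ∑ a : A, softmax τ q a = 1 := by
  have hS : (0:ℝ) < ∑ b : A, Real.exp (q b / τ) :=
    Finset.sum_pos (fun b _ => Real.exp_pos _) Finset.univ_nonempty
  simp only [softmax]
  rw [← Finset.sum_div, div_self hS.ne']

lemma softmax_le_one (a : A) : softmax τ q a ≤ 1 := by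
  have h := softmax_sum_one τ q
  calc softmax τ q a ≤ ∑ b : A, softmax τ q b :=
        Finset.single_le_sum (fun b _ => softmax_nonneg_s19 τ q b) (Finset.mem_univ a)
    _ = 1 := h

lemma softmax_le_exp (a g : A) : softmax τ q a ≤ Real.exp ((q a - q g) / τ) := by
  have hg : Real.exp (q g / τ) ≤ ∑ b : A, Real.exp (q b / τ) :=
    Finset.single_le_sum (f := fun b => Real.exp (q b / τ))
      (fun b _ => (Real.exp_pos _).le) (Finset.mem_univ g)
  calc softmax τ q a ≤ Real.exp (q a / τ) / Real.exp (q g / τ) :=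
        div_le_div_of_nonneg_left (Real.exp_pos _).le (Real.exp_pos _) hg
    _ = Real.exp ((q a - q g) / τ) := by rw [← Real.exp_sub, sub_div]

end helpers

lemma one_sub_prod_le {ι : Type*} (s : Finset ι) (x : ι → ℝ)
    (h0 : ∀ i, 0 ≤ x i) (h1 : ∀ i, x i ≤ 1) :
    1 - ∏ i ∈ s, x i ≤ ∑ i ∈ s, (1 - x i) := by
  induction s using Finset.cons_induction with
  | empty => simp
  | cons j s hj ih =>
    rw [Finset.prod_cons, Finset.sum_cons]
    have hp : ∏ i ∈ s, x i ≤ 1 := Finset.prod_le_one (fun i _ => h0 i) (fun i _ => h1 i)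
    nlinarith [h0 j, h1 j]

/-- quantitative loss convergence: if at `q` each agent `i`'s local values
(the coordinates `q (c i b)`) have strict maximizer `g i` with gap at least `δ > 0`, and
`R = max_a (y(a) − Q_tot(a;q))²`, then for every `τ > 0`,
`|L_τ(q) − L_0(q)| ≤ 2 R (Σ_i (|A_i| − 1)) exp(−δ/τ)`. -/
theorem loss_convergence_quantitative {N d : ℕ} {A : Fin N → Type*}
    [∀ i, Fintype (A i)] [∀ i, Nonempty (A i)]
    (c : ∀ i, A i → Fin d)
    (y : (∀ i, A i) → ℝ) (Qtot : (∀ i, A i) → (Fin d → ℝ) → ℝ)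
    (q : Fin d → ℝ) (g : ∀ i, A i) (δ : ℝ) (hδ : 0 < δ)
    (hgap : ∀ i, ∀ b ≠ g i, q (c i b) + δ ≤ q (c i (g i)))
    (R : ℝ)
    (hR : R = Finset.univ.sup' Finset.univ_nonempty
      (fun a : ∀ i, A i => (y a - Qtot a q) ^ 2))
    {τ : ℝ} (hτ : 0 < τ) :
    |(∑ a : ∀ i, A i,
        (∏ i, softmax τ (fun b => q (c i b)) (a i)) * (y a - Qtot a q) ^ 2)
      - (y g - Qtot g q) ^ 2| ≤
      2 * R * (∑ i, ((Fintype.card (A i) : ℝ) - 1)) * Real.exp (-δ / τ) := by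
  classical
  set π : ∀ i, A i → ℝ := fun i => softmax τ (fun b => q (c i b)) with hπ
  set p : (∀ i, A i) → ℝ := fun a => ∏ i, π i (a i) with hp
  set f : (∀ i, A i) → ℝ := fun a => (y a - Qtot a q) ^ 2 with hf
  have hfnn : ∀ a, 0 ≤ f a := fun a => sq_nonneg _
  have hfR : ∀ a, f a ≤ R := fun a => hR ▸ Finset.le_sup' _ (Finset.mem_univ a)
  have hR0 : 0 ≤ R := le_trans (hfnn g) (hfR g)
  have hπnn : ∀ i b, 0 ≤ π i b := fun i b => softmax_nonneg_s19 _ _ b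
  have hπ1 : ∀ i b, π i b ≤ 1 := fun i b => softmax_le_one _ _ b
  have hpnn : ∀ a, 0 ≤ p a := fun a => Finset.prod_nonneg fun i _ => hπnn i (a i)
  have hsum : ∑ a : ∀ i, A i, p a = 1 := by
    rw [hp]
    rw [← Fintype.piFinset_univ, ← Finset.prod_univ_sum]
    exact Finset.prod_eq_one fun i _ => softmax_sum_one _ _
  -- key bound on 1 - p g
  have hkey : 1 - p g ≤ (∑ i, ((Fintype.card (A i) : ℝ) - 1)) * Real.exp (-δ / τ) := by
    have h1 : 1 - p g ≤ ∑ i, (1 - π i (g i)) :=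
      one_sub_prod_le _ _ (fun i => hπnn i (g i)) (fun i => hπ1 i (g i))
    refine h1.trans ?_
    rw [Finset.sum_mul]
    refine Finset.sum_le_sum fun i _ => ?_
    have hone : (1:ℝ) = ∑ b : A i, π i b := (softmax_sum_one _ _).symm
    have : 1 - π i (g i) = ∑ b ∈ Finset.univ.erase (g i), π i b := by
      rw [hone, ← Finset.add_sum_erase _ _ (Finset.mem_univ (g i))]; ring
    rw [this]
    have hcard : ((Fintype.card (A i) : ℝ) - 1) =
        (Finset.univ.erase (g i)).card := by
      rw [Finset.card_erase_of_mem (Finset.mem_univ _), Finset.card_univ,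
        Nat.cast_sub Fintype.card_pos, Nat.cast_one]
    calc ∑ b ∈ Finset.univ.erase (g i), π i b
        ≤ ∑ b ∈ Finset.univ.erase (g i), Real.exp (-δ / τ) := by
          refine Finset.sum_le_sum fun b hb => ?_
          have hbne : b ≠ g i := Finset.ne_of_mem_erase hb
          refine (softmax_le_exp τ _ b (g i)).trans ?_
          apply Real.exp_le_exp.mpr
          have := hgap i b hbne
          rw [div_le_div_iff₀ hτ hτ]
          nlinarith
      _ = ((Fintype.card (A i) : ℝ) - 1) * Real.exp (-δ / τ) := by
          rw [Finset.sum_const, hcard, nsmul_eq_mul]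
  have habs : |(∑ a : ∀ i, A i, p a * f a) - f g| ≤ R * (1 - p g) := by
    have heq : ∑ a : ∀ i, A i, p a * (f a - f g)
        = (∑ a : ∀ i, A i, p a * f a) - f g := by
      simp only [mul_sub]
      rw [Finset.sum_sub_distrib, ← Finset.sum_mul, hsum, one_mul]
    rw [← heq]
    calc |∑ a : ∀ i, A i, p a * (f a - f g)|
        ≤ ∑ a : ∀ i, A i, |p a * (f a - f g)| := Finset.abs_sum_le_sum_abs _ _
      _ = ∑ a : ∀ i, A i, p a * |f a - f g| := by
          congr 1; ext a; rw [abs_mul, abs_of_nonneg (hpnn a)]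
      _ ≤ ∑ a ∈ Finset.univ.erase g, p a * R + p g * |f g - f g| := by
          rw [← Finset.add_sum_erase _ _ (Finset.mem_univ g), add_comm]
          gcongr with a ha
          · exact hpnn a
          · rw [abs_sub_le_iff]
            constructor <;> nlinarith [hfnn a, hfR a, hfnn g, hfR g]
      _ = R * (1 - p g) := by
          rw [sub_self, abs_zero, mul_zero, add_zero, ← Finset.sum_mul]
          have : ∑ a ∈ Finset.univ.erase g, p a = 1 - p g := by
            rw [← hsum, ← Finset.add_sum_erase _ _ (Finset.mem_univ g)]; ring
          rw [this, mul_comm]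
  calc |(∑ a : ∀ i, A i, p a * f a) - f g| ≤ R * (1 - p g) := habs
    _ ≤ R * ((∑ i, ((Fintype.card (A i) : ℝ) - 1)) * Real.exp (-δ / τ)) := by
        apply mul_le_mul_of_nonneg_left hkey hR0
    _ ≤ 2 * R * (∑ i, ((Fintype.card (A i) : ℝ) - 1)) * Real.exp (-δ / τ) := by
        have hsnn : 0 ≤ ∑ i, ((Fintype.card (A i) : ℝ) - 1) :=
          Finset.sum_nonneg fun i _ => by
            have h1 : (1:ℕ) ≤ Fintype.card (A i) := Fintype.card_pos
            have : (1:ℝ) ≤ (Fintype.card (A i) : ℝ) := by exact_mod_cast h1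
            linarith
        have hnn : 0 ≤ (∑ i, ((Fintype.card (A i) : ℝ) - 1)) * Real.exp (-δ / τ) :=
          mul_nonneg hsnn (Real.exp_pos _).le
        nlinarith [mul_nonneg hR0 hnn]
end
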